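/- arXiv:2502.17375 — 4 statements merged into one kernel-verified Lean document; each statement's English description precedes it below -/
import Mathlib

section
/- Let (Ω, R, K) be a bidirectional kinetic system satisfying detailed balance with energy vector E (so log(K_{-R}/K_R) = Σ_i R(i)E(i) for all reactions R). Then a strictly positive vector N* ∈ (0,∞)^N is a steady state of the mass-action ODE system if and only if N*_i = e^{-E'(i)} for some vector E' satisfying Σ_i R(i)E'(i) = log(K_{-R}/K_R) for all reactions R, i.e. E' = E + m for some conservation law m. -/
/-!
Write `n = exp L` with `L = log n`. Detailed balance gives `K₋ᵣ = Kᵣ exp ⟨R, E⟩`, so the flux of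
reaction `R` factors as `Jᵣ(n) = cᵣ (1 - exp Dᵣ)` with `cᵣ > 0` and `Dᵣ = ⟨R, E + L⟩`. At a steady state
`∑ᵣ Jᵣ Dᵣ = ⟨∑ᵣ R Jᵣ, E + L⟩ = 0`, while every term `cᵣ (1 - exp Dᵣ) Dᵣ` is `≤ 0`; hence all `Dᵣ = 0`,
i.e. `E' = -L` satisfies `⟨R, E'⟩ = ⟨R, E⟩ = log (K₋ᵣ / Kᵣ)`. Conversely such an `E'` makes every flux vanish.
-/

open Finset Real

lemma one_sub_exp_mul_self_nonpos (x : ℝ) : (1 - exp x) * x ≤ 0 := by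
  rcases le_or_gt x 0 with hx | hx
  · exact mul_nonpos_of_nonneg_of_nonpos (by linarith [exp_le_one_iff.2 hx]) hx
  · exact mul_nonpos_of_nonpos_of_nonneg (by linarith [one_le_exp hx.le]) hx.le

lemma one_sub_exp_mul_self_eq_zero_iff {x : ℝ} : (1 - exp x) * x = 0 ↔ x = 0 := by
  refine ⟨fun h => ?_, fun h => by simp [h]⟩
  rcases mul_eq_zero.1 h with h | h
  · exact exp_eq_one_iff x |>.1 (by linarith)
  · exact h

lemma sum_mul_one_sub_exp_eq_zero_iff {ι κ : Type*} [Fintype ι] [Fintype κ]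
    (A : ι → κ → ℝ) (c : ι → ℝ) (hc : ∀ j, 0 < c j) (v : κ → ℝ) :
    (∀ k, ∑ j, A j k * (c j * (1 - exp (∑ i, A j i * v i))) = 0) ↔
      ∀ j, ∑ i, A j i * v i = 0 := by
  refine ⟨fun h => ?_, fun h k => by simp only [h, exp_zero, sub_self, mul_zero, sum_const_zero]⟩
  set D : ι → ℝ := fun j => ∑ i, A j i * v i
  have hsum : ∑ j, c j * ((1 - exp (D j)) * D j) = 0 := calc
    ∑ j, c j * ((1 - exp (D j)) * D j)
        = ∑ k, v k * ∑ j, A j k * (c j * (1 - exp (D j))) := by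
      simp only [D, mul_sum]
      rw [sum_comm]
      exact sum_congr rfl fun _ _ => sum_congr rfl fun _ _ => by ring
    _ = 0 := sum_eq_zero fun k _ => by rw [h k, mul_zero]
  have hnonpos : ∀ j ∈ univ, c j * ((1 - exp (D j)) * D j) ≤ 0 := fun j _ =>
    mul_nonpos_of_nonneg_of_nonpos (hc j).le (one_sub_exp_mul_self_nonpos _)
  intro j
  have hj := (sum_eq_zero_iff_of_nonpos hnonpos).1 hsum j (mem_univ j)
  exact one_sub_exp_mul_self_eq_zero_iff.1 ((mul_eq_zero.1 hj).resolve_left (hc j).ne')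

lemma prod_zpow_eq_exp_sum {ι : Type*} {s : Finset ι} (k : ι → ℤ) {n : ι → ℝ} (hn : ∀ i, 0 < n i) :
    ∏ i ∈ s, n i ^ k i = exp (∑ i ∈ s, k i * log (n i)) := by
  rw [exp_sum]
  refine prod_congr rfl fun i _ => ?_
  rw [← rpow_intCast, rpow_def_of_pos (hn i), mul_comm]

section MassAction

variable {ι : Type*} [Fintype ι] (ρ : ι → ℤ)

lemma sum_filter_pos_add_sum_filter_neg (f : ι → ℝ) :
    ∑ i ∈ univ.filter (fun i => 0 < ρ i), ρ i * f i
      + ∑ i ∈ univ.filter (fun i => ρ i < 0), ρ i * f i = ∑ i, ρ i * f i := by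
  rw [sum_filter, sum_filter, ← sum_add_distrib]
  refine sum_congr rfl fun i _ => ?_
  rcases lt_trichotomy (ρ i) 0 with h | h | h
  · simp [h, h.not_gt]
  · simp [h]
  · simp [h, h.not_gt]

lemma prod_filter_pos_zpow_eq {n : ι → ℝ} (hn : ∀ i, 0 < n i) :
    ∏ i ∈ univ.filter (fun i => 0 < ρ i), n i ^ ρ i
      = (∏ i ∈ univ.filter (fun i => ρ i < 0), n i ^ (-ρ i)) * exp (∑ i, ρ i * log (n i)) := by
  simp only [prod_zpow_eq_exp_sum _ hn, ← exp_add, Int.cast_neg, neg_mul, sum_neg_distrib,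
    ← sum_filter_pos_add_sum_filter_neg ρ]
  ring_nf

lemma massAction_flux_eq {K Kr : ℝ} (hK : 0 < K) (hKr : 0 < Kr) {E : ι → ℝ}
    (hdb : log (Kr / K) = ∑ i, ρ i * E i) {n : ι → ℝ} (hn : ∀ i, 0 < n i) :
    K * ∏ i ∈ univ.filter (fun i => ρ i < 0), n i ^ (-ρ i)
        - Kr * ∏ i ∈ univ.filter (fun i => 0 < ρ i), n i ^ ρ i
      = K * (∏ i ∈ univ.filter (fun i => ρ i < 0), n i ^ (-ρ i))
          * (1 - exp (∑ i, ρ i * (E i + log (n i)))) := by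
  have hKr_eq : Kr = K * exp (∑ i, ρ i * E i) := by
    rw [← hdb, exp_log (div_pos hKr hK), mul_div_cancel₀ _ hK.ne']
  simp only [mul_add, sum_add_distrib, exp_add, prod_filter_pos_zpow_eq ρ hn, hKr_eq]
  ring

end MassAction

/-- In a mass-action kinetic system with detailed balance (energy `E`), a
strictly positive vector is a steady state iff it is of the form `e^{-E'}` for
an energy vector `E'` (i.e. `E' = E + m` for a conservation law `m`). -/
theorem stmt3 (N r : ℕ) (R : Fin r → Fin N → ℤ) (K Kr : Fin r → ℝ)
    (hK : ∀ j, 0 < K j) (hKr : ∀ j, 0 < Kr j)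
    (E : Fin N → ℝ)
    (hdb : ∀ j, Real.log (Kr j / K j) = ∑ i, (R j i : ℝ) * E i)
    (J : Fin r → (Fin N → ℝ) → ℝ)
    (hJ : ∀ j n, J j n =
      K j * ∏ i ∈ univ.filter (fun i => R j i < 0), n i ^ (-(R j i))
        - Kr j * ∏ i ∈ univ.filter (fun i => 0 < R j i), n i ^ (R j i))
    (Nstar : Fin N → ℝ) (hpos : ∀ i, 0 < Nstar i) :
    (∀ ℓ, ∑ j, (R j ℓ : ℝ) * J j Nstar = 0) ↔
      ∃ E' : Fin N → ℝ,
        (∀ j, ∑ i, (R j i : ℝ) * E' i = Real.log (Kr j / K j)) ∧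
        ∀ i, Nstar i = Real.exp (-(E' i)) := by
  have hc : ∀ j, 0 < K j * ∏ i ∈ univ.filter (fun i => R j i < 0), Nstar i ^ (-R j i) :=
    fun j => mul_pos (hK j) (prod_pos fun i _ => zpow_pos (hpos i) _)
  simp only [hJ, massAction_flux_eq _ (hK _) (hKr _) (hdb _) hpos]
  rw [sum_mul_one_sub_exp_eq_zero_iff (fun j i => (R j i : ℝ)) _ hc fun i => E i + log (Nstar i)]
  constructor
  · intro hD
    refine ⟨fun i => -log (Nstar i), fun j => ?_, fun i => by rw [neg_neg, exp_log (hpos i)]⟩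
    have hDj := hD j
    simp only [mul_add, sum_add_distrib, mul_neg, sum_neg_distrib, hdb] at hDj ⊢
    linarith
  · rintro ⟨E', hE', hN⟩ j
    simp only [hN, log_exp, mul_add, sum_add_distrib, mul_neg, sum_neg_distrib, hE', hdb]
    ring
end

section
/- Consider the ODE system ṅ_2 = f(t) − (α+1)n_2 + n_3 n_4, ṅ_3 = f(t) − α n_3 + n_2 − n_3 n_4, ṅ_4 = n_2 − n_3 n_4, with α > 0, f continuous, and initial data n_2(0) = n_3(0) = f(0)/α, n_4(0) = 1. Then the quantity g(t) = n_2(t) − n_3(t)n_4(t) satisfies g(t) = 0 for all t ≥ 0, and consequently n_4(t) = 1 for all t ≥ 0 (assuming the solution exists and remains finite on [0,∞)). -/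
/-!
The defect `(n₂ - n₃ n₄, 1 - n₄)` vanishes at `t = 0` and solves a linear ODE whose coefficients
`f` and `1 + α + n₄ + n₃` are continuous. On each `[0, T]` they are bounded, so Grönwall's
inequality forces the defect to stay zero.
-/

open Set

theorem eq_zero_of_norm_deriv_le_mul_norm_of_continuousOn {E : Type*} [NormedAddCommGroup E]
    [NormedSpace ℝ E] {F F' : ℝ → E} {k : ℝ → ℝ} {a b : ℝ} (hF : ContinuousOn F (Icc a b))
    (hF' : ∀ x ∈ Ico a b, HasDerivWithinAt F (F' x) (Ici x) x) (ha : F a = 0)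
    (hk : ContinuousOn k (Icc a b)) (bound : ∀ x ∈ Ico a b, ‖F' x‖ ≤ k x * ‖F x‖) :
    ∀ x ∈ Icc a b, F x = 0 := by
  obtain ⟨K, hK⟩ := isCompact_Icc.exists_bound_of_continuousOn hk
  refine eq_zero_of_abs_deriv_le_mul_abs_self_of_eq_zero_right (K := K) hF hF' ha fun x hx => ?_
  calc ‖F' x‖ ≤ k x * ‖F x‖ := bound x hx
    _ ≤ K * ‖F x‖ := by
      gcongr
      exact (le_abs_self _).trans (hK x (Ico_subset_Icc_self hx))

def defect (n2 n3 n4 : ℝ → ℝ) (t : ℝ) : ℝ × ℝ := (n2 t - n3 t * n4 t, 1 - n4 t)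

/-- Along the system the defect solves `v' = defectField (f t) (1 + α + n₄ t + n₃ t) v`. -/
def defectField (p q : ℝ) (v : ℝ × ℝ) : ℝ × ℝ := (p * v.2 - q * v.1, -v.1)

theorem norm_defectField_le (p q : ℝ) (v : ℝ × ℝ) :
    ‖defectField p q v‖ ≤ (|p| + |q| + 1) * ‖v‖ := by
  have h1 : |v.1| ≤ ‖v‖ := norm_fst_le v
  have h2 : |v.2| ≤ ‖v‖ := norm_snd_le v
  refine max_le ?_ ?_
  · calc ‖p * v.2 - q * v.1‖ ≤ |p| * |v.2| + |q| * |v.1| := by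
          simpa only [Real.norm_eq_abs, abs_mul] using norm_sub_le (p * v.2) (q * v.1)
      _ ≤ (|p| + |q| + 1) * ‖v‖ := by
          nlinarith [mul_le_mul_of_nonneg_left h2 (abs_nonneg p),
            mul_le_mul_of_nonneg_left h1 (abs_nonneg q), norm_nonneg v]
  · calc ‖-v.1‖ = |v.1| := by rw [norm_neg, Real.norm_eq_abs]
      _ ≤ (|p| + |q| + 1) * ‖v‖ := by
          nlinarith [mul_nonneg (abs_nonneg p) (norm_nonneg v),
            mul_nonneg (abs_nonneg q) (norm_nonneg v)]

theorem hasDerivAt_defect {α : ℝ} {f n2 n3 n4 : ℝ → ℝ} {t : ℝ}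
    (h2 : HasDerivAt n2 (f t - (α + 1) * n2 t + n3 t * n4 t) t)
    (h3 : HasDerivAt n3 (f t - α * n3 t + n2 t - n3 t * n4 t) t)
    (h4 : HasDerivAt n4 (n2 t - n3 t * n4 t) t) :
    HasDerivAt (defect n2 n3 n4)
      (defectField (f t) (1 + α + n4 t + n3 t) (defect n2 n3 n4 t)) t := by
  refine (h2.sub (h3.mul h4)).prodMk ((hasDerivAt_const t 1).sub h4) |>.congr_deriv ?_
  simp only [defect, defectField, Prod.mk.injEq]
  constructor <;> ring

theorem stmt6_general (α : ℝ) (f : ℝ → ℝ) (hf : Continuous f)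
    (n2 n3 n4 : ℝ → ℝ)
    (h2 : ∀ t ≥ (0:ℝ), HasDerivAt n2 (f t - (α + 1) * n2 t + n3 t * n4 t) t)
    (h3 : ∀ t ≥ (0:ℝ), HasDerivAt n3 (f t - α * n3 t + n2 t - n3 t * n4 t) t)
    (h4 : ∀ t ≥ (0:ℝ), HasDerivAt n4 (n2 t - n3 t * n4 t) t)
    (i2 : n2 0 = f 0 / α) (i3 : n3 0 = f 0 / α) (i4 : n4 0 = 1) :
    ∀ t ≥ (0:ℝ), n2 t - n3 t * n4 t = 0 ∧ n4 t = 1 := by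
  intro T hT
  have hderiv : ∀ t ∈ Icc 0 T, HasDerivAt (defect n2 n3 n4)
      (defectField (f t) (1 + α + n4 t + n3 t) (defect n2 n3 n4 t)) t :=
    fun t ht => hasDerivAt_defect (h2 t ht.1) (h3 t ht.1) (h4 t ht.1)
  have hc3 : ContinuousOn n3 (Icc 0 T) := fun t ht => (h3 t ht.1).continuousAt.continuousWithinAt
  have hc4 : ContinuousOn n4 (Icc 0 T) := fun t ht => (h4 t ht.1).continuousAt.continuousWithinAt
  have hvanish := eq_zero_of_norm_deriv_le_mul_norm_of_continuousOn
    (fun t ht => (hderiv t ht).continuousAt.continuousWithinAt)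
    (fun t ht => (hderiv t (Ico_subset_Icc_self ht)).hasDerivWithinAt)
    (by simp [defect, i2, i3, i4])
    (k := fun t => |f t| + |1 + α + n4 t + n3 t| + 1) (by fun_prop)
    (fun t _ => norm_defectField_le _ _ _) T ⟨hT, le_rfl⟩
  obtain ⟨hg, hn4⟩ := Prod.mk_eq_zero.1 hvanish
  exact ⟨hg, by linarith⟩

/-- Example 3.2: for the fine-tuned signalling system, the quantity
`n₂ - n₃ n₄` vanishes identically and hence `n₄ ≡ 1`: the system does not
respond to the signal. -/
theorem stmt6 (α : ℝ) (hα : 0 < α) (f : ℝ → ℝ) (hf : Continuous f)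
    (n2 n3 n4 : ℝ → ℝ)
    (h2 : ∀ t ≥ (0:ℝ), HasDerivAt n2 (f t - (α + 1) * n2 t + n3 t * n4 t) t)
    (h3 : ∀ t ≥ (0:ℝ), HasDerivAt n3 (f t - α * n3 t + n2 t - n3 t * n4 t) t)
    (h4 : ∀ t ≥ (0:ℝ), HasDerivAt n4 (n2 t - n3 t * n4 t) t)
    (i2 : n2 0 = f 0 / α) (i3 : n3 0 = f 0 / α) (i4 : n4 0 = 1) :
    ∀ t ≥ (0:ℝ), n2 t - n3 t * n4 t = 0 ∧ n4 t = 1 :=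
  stmt6_general α f hf n2 n3 n4 h2 h3 h4 i2 i3 i4
end

section
/- Consider the solution of the linear system φ_1(t) = c·t (c > 0), dφ_ℓ/dt = Σ_j A_{ℓj} φ_j for ℓ ∈ Ω\{1}, with φ_ℓ(0) = 0 for ℓ ≠ 1, where A is a real matrix. Suppose the index set Ω is layered as S_0 = {1}, S_1, ..., S_L with A_{ℓj} = 0 whenever ℓ ∈ S_n and j ∈ S_m with |n−m| ≥ 2 (adjacency only between consecutive layers or within reach). Then for ℓ ∈ S_n the Taylor expansion at t = 0 is φ_ℓ(t) = c_{n,ℓ} t^{n+1} + o(t^{n+1}) with c_{n,ℓ} = (c/(n+1)!)·Σ over chains (j_0=1, j_1 ∈ S_1, ..., j_{n-1} ∈ S_{n-1}) of A_{ℓ j_{n-1}} A_{j_{n-1} j_{n-2}} ··· A_{j_1 j_0}. -/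
/-!
Integrating `φ_ℓ' = ∑ⱼ A_{ℓj} φ_j` from `0` raises the order of vanishing at `0⁺` by one. We prove
by induction on `n` that `φ_ℓ = c / (n+1)! · C_n(ℓ) t^(n+1) + o(t^(n+1))` for every `ℓ` with
`layer ℓ ≥ n`, where `C_n(ℓ)` is the chain sum, which vanishes unless `layer ℓ = n`. Allowing all
deeper layers is what makes the induction close: a substance in layer `≥ n + 1` only sees
substances in layers `≥ n`, and `C_{n+1}(ℓ) = ∑ⱼ A_{ℓj} C_n(j)` matches the factor `1/(n+2)`
produced by integrating `t^(n+1)`.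
-/

open Finset Asymptotics Filter Topology

theorem isLittleO_pow_succ_of_hasDerivAt {f g : ℝ → ℝ} {n : ℕ}
    (hf : ∀ t, HasDerivAt f (g t) t) (hf0 : f 0 = 0)
    (hg : g =o[𝓝[>] 0] fun t => t ^ n) :
    f =o[𝓝[>] 0] fun t => t ^ (n + 1) := by
  refine isLittleO_iff.2 fun ε hε => ?_
  obtain ⟨δ, hδ, hgδ⟩ := (nhdsGT_basis (0 : ℝ)).eventually_iff.1 (isLittleO_iff.1 hg hε)
  filter_upwards [Ioo_mem_nhdsGT hδ] with t ht
  obtain ⟨s, hs, hslope⟩ := exists_hasDerivAt_eq_slope f g ht.1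
    (fun x _ => (hf x).continuousAt.continuousWithinAt) fun x _ => hf x
  rw [hf0, sub_zero, sub_zero, eq_div_iff ht.1.ne'] at hslope
  have hst : ‖s ^ n‖ ≤ ‖t ^ n‖ := by
    simp only [norm_pow, Real.norm_of_nonneg hs.1.le, Real.norm_of_nonneg ht.1.le]
    exact pow_le_pow_left₀ hs.1.le hs.2.le n
  calc ‖f t‖ = ‖g s‖ * ‖t‖ := by rw [← hslope, norm_mul]
    _ ≤ ε * ‖t ^ n‖ * ‖t‖ := by
        gcongr
        exact (hgδ ⟨hs.1, hs.2.trans ht.2⟩).trans (by gcongr)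
    _ = ε * ‖t ^ (n + 1)‖ := by rw [pow_succ, norm_mul, mul_assoc]

theorem isLittleO_sub_pow_succ_of_hasDerivAt_sum {ι : Type*} [Fintype ι] {f : ℝ → ℝ}
    {ψ : ι → ℝ → ℝ} {a p : ι → ℝ} {n : ℕ}
    (hf : ∀ t, HasDerivAt f (∑ j, a j * ψ j t) t) (hf0 : f 0 = 0)
    (hψ : ∀ j, a j ≠ 0 → (fun t => ψ j t - p j * t ^ n) =o[𝓝[>] 0] fun t => t ^ n) :
    (fun t => f t - (∑ j, a j * p j) / (n + 1) * t ^ (n + 1)) =o[𝓝[>] 0]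
      fun t => t ^ (n + 1) := by
  set q := (∑ j, a j * p j) / (n + 1)
  have hderiv : ∀ t, HasDerivAt (fun t => f t - q * t ^ (n + 1))
      (∑ j, a j * (ψ j t - p j * t ^ n)) t := by
    intro t
    refine ((hf t).fun_sub ((hasDerivAt_pow (n + 1) t).const_mul q)).congr_deriv ?_
    simp only [mul_sub, sum_sub_distrib, Nat.cast_add, Nat.cast_one, add_tsub_cancel_right]
    congr 1
    rw [div_mul_eq_mul_div, div_eq_iff (by positivity), sum_mul, sum_mul]
    exact sum_congr rfl fun j _ => by ring
  refine isLittleO_pow_succ_of_hasDerivAt hderiv (by simp [hf0]) (IsLittleO.fun_sum fun j _ => ?_)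
  by_cases hj : a j = 0
  · simp [hj]
  · exact (hψ j hj).const_mul_left (a j)

section Chains

variable {ι : Type*} [Fintype ι] [DecidableEq ι] (layer : ι → ℕ) (v0 : ι) (A : Matrix ι ι ℝ)

noncomputable def chainSum (n : ℕ) (ℓ : ι) : ℝ :=
  ∑ j ∈ univ.filter (fun j : Fin (n + 1) → ι =>
      j 0 = v0 ∧ j (Fin.last n) = ℓ ∧ ∀ i : Fin (n + 1), layer (j i) = i),
    ∏ i : Fin n, A (j i.succ) (j i.castSucc)

variable {layer v0 A}

theorem chainSum_zero_self (hl0 : layer v0 = 0) : chainSum layer v0 A 0 v0 = 1 := by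
  have hchains : univ.filter (fun j : Fin 1 → ι =>
      j 0 = v0 ∧ j (Fin.last 0) = v0 ∧ ∀ i : Fin 1, layer (j i) = i) = {fun _ => v0} := by
    ext j
    simp only [mem_filter, mem_univ, true_and, Finset.mem_singleton, Fin.last_zero,
      Fin.forall_fin_one, Fin.val_zero, and_self_left]
    constructor
    · rintro ⟨h0, -⟩
      exact funext fun i => (congrArg j (Subsingleton.elim i 0)).trans h0
    · rintro rfl
      exact ⟨rfl, hl0⟩
  rw [chainSum, hchains, sum_singleton, Fin.prod_univ_zero]

theorem chainSum_zero_of_ne {ℓ : ι} (hℓ : ℓ ≠ v0) : chainSum layer v0 A 0 ℓ = 0 := by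
  refine sum_eq_zero fun j hj => absurd ?_ hℓ
  simp only [mem_filter, mem_univ, true_and, Fin.last_zero] at hj
  exact hj.2.1.symm.trans hj.1

theorem chainSum_eq_zero_of_layer_ne {n : ℕ} {ℓ : ι} (hℓ : layer ℓ ≠ n) :
    chainSum layer v0 A n ℓ = 0 := by
  refine sum_eq_zero fun j hj => absurd ?_ hℓ
  simp only [mem_filter, mem_univ, true_and] at hj
  rw [← hj.2.1, hj.2.2, Fin.val_last]

theorem chainSum_succ_of_layer_eq {n : ℕ} {ℓ : ι} (hℓ : layer ℓ = n + 1) :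
    chainSum layer v0 A (n + 1) ℓ = ∑ k, A ℓ k * chainSum layer v0 A n k := by
  set T := univ.filter (fun j : Fin (n + 1) → ι => j 0 = v0 ∧ ∀ i, layer (j i) = i)
  have hfiber : ∀ k, A ℓ k * chainSum layer v0 A n k =
      ∑ j ∈ T with j (Fin.last n) = k,
        A ℓ (j (Fin.last n)) * ∏ i : Fin n, A (j i.succ) (j i.castSucc) := by
    intro k
    rw [chainSum, mul_sum, filter_filter]
    refine sum_congr (filter_congr fun j _ => by tauto) fun j hj => ?_
    rw [(mem_filter.1 hj).2.2]
  rw [sum_congr rfl fun k _ => hfiber k, sum_fiberwise, chainSum]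
  refine sum_nbij' Fin.init (fun j => Fin.snoc j ℓ) ?_ ?_ ?_ ?_ ?_
  · intro J hJ
    simp only [T, mem_filter, mem_univ, true_and] at hJ ⊢
    obtain ⟨h0, -, hlayer⟩ := hJ
    exact ⟨h0, fun i => hlayer i.castSucc⟩
  · intro j hj
    simp only [T, mem_filter, mem_univ, true_and] at hj ⊢
    refine ⟨by simpa [Fin.snoc] using hj.1, Fin.snoc_last _ _, Fin.lastCases ?_ fun i => ?_⟩
    · simpa using hℓ
    · simpa using hj.2 i
  · intro J hJ
    rw [← (mem_filter.1 hJ).2.2.1]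
    exact Fin.snoc_init_self J
  · intro j _
    exact Fin.init_snoc _ _
  · intro J hJ
    rw [Fin.prod_univ_castSucc, mul_comm, Fin.succ_last, (mem_filter.1 hJ).2.2.1]
    rfl

theorem chainSum_succ (hA : ∀ ℓ j, layer j + 2 ≤ layer ℓ → A ℓ j = 0) {n : ℕ} {ℓ : ι}
    (hℓ : n + 1 ≤ layer ℓ) :
    chainSum layer v0 A (n + 1) ℓ = ∑ k, A ℓ k * chainSum layer v0 A n k := by
  rcases hℓ.eq_or_lt with hℓ | hℓ
  · exact chainSum_succ_of_layer_eq hℓ.symm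
  rw [chainSum_eq_zero_of_layer_ne hℓ.ne']
  refine (sum_eq_zero fun k _ => ?_).symm
  by_cases hk : layer k = n
  · rw [hA ℓ k (by omega), zero_mul]
  · rw [chainSum_eq_zero_of_layer_ne hk, mul_zero]

end Chains

section Response

variable {ι : Type*} [Fintype ι] [DecidableEq ι] {layer : ι → ℕ} {v0 : ι} {A : Matrix ι ι ℝ}
  {c : ℝ} {φ : ι → ℝ → ℝ}

theorem isLittleO_sub_chainSum_mul_pow (hl0 : layer v0 = 0)
    (hA : ∀ ℓ j, layer j + 2 ≤ layer ℓ → A ℓ j = 0) (hφ1 : ∀ t, φ v0 t = c * t)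
    (hode : ∀ ℓ, ℓ ≠ v0 → ∀ t, HasDerivAt (φ ℓ) (∑ j, A ℓ j * φ j t) t)
    (hinit : ∀ ℓ, ℓ ≠ v0 → φ ℓ 0 = 0) (n : ℕ) (ℓ : ι) (hℓ : n ≤ layer ℓ) :
    (fun t => φ ℓ t - c / (n + 1).factorial * chainSum layer v0 A n ℓ * t ^ (n + 1))
      =o[𝓝[>] 0] fun t => t ^ (n + 1) := by
  induction n generalizing ℓ with
  | zero =>
    by_cases hℓv : ℓ = v0
    · subst hℓv
      simp [hφ1, chainSum_zero_self hl0]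
    have hφ0 : ∀ j, Tendsto (φ j) (𝓝[>] 0) (𝓝 0) := by
      intro j
      refine tendsto_nhdsWithin_of_tendsto_nhds ?_
      by_cases hj : j = v0
      · rw [hj, funext hφ1]
        simpa using (continuous_const_mul c).tendsto 0
      · simpa [hinit j hj] using (hode j hj 0).continuousAt.tendsto
    have key := isLittleO_sub_pow_succ_of_hasDerivAt_sum (n := 0) (p := 0) (hode ℓ hℓv)
      (hinit ℓ hℓv) fun j _ => by simpa using (isLittleO_one_iff ℝ).2 (hφ0 j)
    simpa [chainSum_zero_of_ne hℓv] using key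
  | succ n ih =>
    have hℓv : ℓ ≠ v0 := by
      rintro rfl
      omega
    have key := isLittleO_sub_pow_succ_of_hasDerivAt_sum (n := n + 1)
      (p := fun j => c / (n + 1).factorial * chainSum layer v0 A n j) (hode ℓ hℓv)
      (hinit ℓ hℓv) fun j hj => ih j (by have := mt (hA ℓ j) hj; omega)
    convert key using 4 with t
    rw [chainSum_succ hA hℓ, Nat.factorial_succ (n + 1), mul_sum, sum_div]
    push_cast
    refine sum_congr rfl fun j _ => ?_
    field_simp

end Response

theorem stmt14_general (Nn : ℕ) (layer : Fin Nn → ℕ) (v0 : Fin Nn)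
    (hl0 : layer v0 = 0)
    (A : Matrix (Fin Nn) (Fin Nn) ℝ)
    (hA : ∀ ℓ j, 2 ≤ |(layer ℓ : ℤ) - (layer j : ℤ)| → A ℓ j = 0)
    (c : ℝ)
    (φ : Fin Nn → ℝ → ℝ)
    (hφ1 : ∀ t, φ v0 t = c * t)
    (hode : ∀ ℓ, ℓ ≠ v0 → ∀ t, HasDerivAt (φ ℓ) (∑ j, A ℓ j * φ j t) t)
    (hinit : ∀ ℓ, ℓ ≠ v0 → φ ℓ 0 = 0)
    (ℓ : Fin Nn) (n : ℕ) (hn : layer ℓ = n) :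
    (fun t => φ ℓ t -
        (c / (Nat.factorial (n + 1) : ℝ) *
          ∑ j ∈ Finset.univ.filter (fun j : Fin (n + 1) → Fin Nn =>
              j 0 = v0 ∧ j (Fin.last n) = ℓ ∧ ∀ i : Fin (n + 1), layer (j i) = i),
            ∏ i : Fin n, A (j i.succ) (j i.castSucc)) * t ^ (n + 1))
      =o[nhdsWithin 0 (Set.Ioi 0)] fun t => t ^ (n + 1) := by
  have hA' : ∀ ℓ j, layer j + 2 ≤ layer ℓ → A ℓ j = 0 := fun ℓ j h =>
    hA ℓ j (le_abs.2 (Or.inl (by omega)))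
  exact isLittleO_sub_chainSum_mul_pow hl0 hA' hφ1 hode hinit n ℓ hn.ge

/-- Hierarchy of responses: for the layered linear system driven by
`φ_{v0}(t) = c t`, a substance `ℓ` in layer `n` satisfies
`φ_ℓ(t) = c_{n,ℓ} t^{n+1} + o(t^{n+1})` as `t → 0⁺`, with
`c_{n,ℓ} = (c/(n+1)!) ∑_{chains} A_{ℓ j_{n-1}} ⋯ A_{j_1 j_0}`. -/
theorem stmt14 (Nn : ℕ) (layer : Fin Nn → ℕ) (v0 : Fin Nn)
    (hl0 : layer v0 = 0) (hl0' : ∀ i, layer i = 0 → i = v0)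
    (A : Matrix (Fin Nn) (Fin Nn) ℝ)
    (hA : ∀ ℓ j, 2 ≤ |(layer ℓ : ℤ) - (layer j : ℤ)| → A ℓ j = 0)
    (c : ℝ) (hc : 0 < c)
    (φ : Fin Nn → ℝ → ℝ)
    (hφ1 : ∀ t, φ v0 t = c * t)
    (hode : ∀ ℓ, ℓ ≠ v0 → ∀ t, HasDerivAt (φ ℓ) (∑ j, A ℓ j * φ j t) t)
    (hinit : ∀ ℓ, ℓ ≠ v0 → φ ℓ 0 = 0)
    (ℓ : Fin Nn) (hℓ : ℓ ≠ v0) (n : ℕ) (hn : layer ℓ = n) :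
    (fun t => φ ℓ t -
        (c / (Nat.factorial (n + 1) : ℝ) *
          ∑ j ∈ Finset.univ.filter (fun j : Fin (n + 1) → Fin Nn =>
              j 0 = v0 ∧ j (Fin.last n) = ℓ ∧ ∀ i : Fin (n + 1), layer (j i) = i),
            ∏ i : Fin n, A (j i.succ) (j i.castSucc)) * t ^ (n + 1))
      =o[nhdsWithin 0 (Set.Ioi 0)] fun t => t ^ (n + 1) :=
  stmt14_general Nn layer v0 hl0 A hA c φ hφ1 hode hinit ℓ n hn
end

section
/- For the network with species (1,...,4) and reactions (1)+(3) ⇌ (2)+(4), (1) ⇌ (2), (3) ⇌ (4), the conservation law space is exactly span{(1,1,0,0), (0,0,1,1)}. In particular the vectors m^{(1)} = (1,0) and m^{(4)} = (0,1) of coefficients of substances 1 and 4 in this basis are orthogonal, so substances 1 and 4 are not M-connected, even though the network's substance graph is connected. -/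
open Matrix

section SubstanceGraph

variable {κ ι M : Type*} [Zero M]

def substanceGraph (R : κ → ι → M) : SimpleGraph ι :=
  SimpleGraph.fromRel fun i k => ∃ j, R j i ≠ 0 ∧ R j k ≠ 0

theorem substanceGraph_eq_top_of_forall_ne_zero {R : κ → ι → M} {j : κ}
    (hj : ∀ i, R j i ≠ 0) : substanceGraph R = ⊤ := by
  ext i k
  exact ⟨SimpleGraph.Adj.ne, fun hik => ⟨hik, .inl ⟨j, hj i, hj k⟩⟩⟩

theorem substanceGraph_connected_of_forall_ne_zero [Nonempty ι] {R : κ → ι → M} {j : κ}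
    (hj : ∀ i, R j i ≠ 0) : (substanceGraph R).Connected := by
  rw [substanceGraph_eq_top_of_forall_ne_zero hj]
  exact SimpleGraph.connected_top

end SubstanceGraph

def network : Fin 3 → Fin 4 → ℝ := ![![-1, 1, -1, 1], ![-1, 1, 0, 0], ![0, 0, -1, 1]]

-- The first reaction is the sum of the other two, so only those constrain `m`.
theorem forall_dotProduct_network_eq_zero_iff (m : Fin 4 → ℝ) :
    (∀ j, m ⬝ᵥ network j = 0) ↔ m 1 = m 0 ∧ m 3 = m 2 := by
  simp only [Fin.forall_fin_succ, IsEmpty.forall_iff, network, dotProduct, Fin.sum_univ_four,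
    cons_val_zero, cons_val_one, cons_val, cons_val_succ, mul_neg, mul_one, mul_zero, add_zero,
    zero_add, and_true]
  constructor
  · rintro ⟨-, h₁, h₂⟩
    constructor <;> linarith
  · rintro ⟨h₁, h₂⟩
    refine ⟨?_, ?_, ?_⟩ <;> linarith

theorem mem_span_network_laws_iff (m : Fin 4 → ℝ) :
    m ∈ Submodule.span ℝ {![1, 1, 0, 0], ![0, 0, 1, 1]} ↔ m 1 = m 0 ∧ m 3 = m 2 := by
  rw [Submodule.mem_span_pair]
  constructor
  · rintro ⟨a, b, rfl⟩
    simp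
  · rintro ⟨h₁, h₃⟩
    refine ⟨m 0, m 2, funext fun i => ?_⟩
    fin_cases i <;> simp [h₁, h₃]

theorem network_substanceGraph_connected : (substanceGraph network).Connected :=
  substanceGraph_connected_of_forall_ne_zero (j := 0) fun i => by
    fin_cases i <;> norm_num [network]

/-- For the network (1)+(3)⇌(2)+(4), (1)⇌(2), (3)⇌(4): the conservation law
space is exactly span{(1,1,0,0),(0,0,1,1)}; the coefficient vectors
`m^{(1)} = (1,0)` and `m^{(4)} = (0,1)` of substances 1 and 4 in this basis are
orthogonal (so 1 and 4 are not M-connected), although the substance graph is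
connected. -/
theorem stmt17 (R : Fin 3 → Fin 4 → ℝ)
    (hR : R = ![![-1,1,-1,1], ![-1,1,0,0], ![0,0,-1,1]])
    (m1 m2 : Fin 4 → ℝ) (hm1 : m1 = ![1,1,0,0]) (hm2 : m2 = ![0,0,1,1]) :
    ({m : Fin 4 → ℝ | ∀ j, m ⬝ᵥ R j = 0} =
      ↑(Submodule.span ℝ {m1, m2} : Submodule ℝ (Fin 4 → ℝ))) ∧
    (m1 0 * m1 3 + m2 0 * m2 3 = 0) ∧
    (SimpleGraph.fromRel
      (fun i k : Fin 4 => ∃ j, R j i ≠ 0 ∧ R j k ≠ 0)).Connected := by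
  change R = network at hR
  subst hR hm1 hm2
  refine ⟨?_, by simp, network_substanceGraph_connected⟩
  ext m
  exact (forall_dotProduct_network_eq_zero_iff m).trans (mem_span_network_laws_iff m).symm
end
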